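/- arXiv:1401.5428 — 4 statements merged into one kernel-verified Lean document; each statement's English description precedes it below -/
import Mathlib

section
/- Let H : B² → ℂ² be a map in the class M₋, with Taylor expansion at the origin H(z) = (-z₁ + Σ_{|α|≥2} q¹_α z^α, -z₂ + Σ_{|α|≥2} q²_α z^α). Then the shearing H^{[c]}(z₁,z₂) = (-z₁ + q¹_{0,2} z₂², -z₂), restricted to B², also belongs to M₋; that is, Re⟨H^{[c]}(z), z⟩ ≤ 0 for all z ∈ B². -/
open Complex

noncomputable section

/-- The open unit ball in `ℂ²`. -/
def B2 : Set (ℂ × ℂ) := {z | ‖z.1‖ ^ 2 + ‖z.2‖ ^ 2 < 1}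

/-- The class `M₋` of holomorphic maps `H : B² → ℂ²` with `H(0) = 0`, `dH₀ = -id`,
and `Re⟨H(z), z⟩ ≤ 0` on `B²`. -/
def MminusClass (H : ℂ × ℂ → ℂ × ℂ) : Prop :=
  DifferentiableOn ℂ H B2 ∧ H 0 = 0 ∧
  (∀ z : ℂ × ℂ, fderiv ℂ H 0 z = -z) ∧
  ∀ z ∈ B2, ((H z).1 * (starRingEnd ℂ) z.1 + (H z).2 * (starRingEnd ℂ) z.2).re ≤ 0

/-- The coefficient `q¹_{0,2} = (1/2)·∂²H₁/∂z₂²(0)` of `z₂²` in the first component of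
the Taylor expansion of `H` at the origin. -/
def shearCoef (H : ℂ × ℂ → ℂ × ℂ) : ℂ :=
  (1 / 2 : ℂ) * iteratedDeriv 2 (fun w : ℂ => (H (0, w)).1) 0

/-!
Fix `z ∈ B²` and restrict `H` to the holomorphic disc `γ w = (w² z₁, w z₂)`, `‖w‖ ≤ 1`, which lies
in `B²`. Since `w̄ = w⁻¹` on the unit circle, there
`K w = z̄₁ H₁(γ w) / w² + z̄₂ H₂(γ w) / w = ⟨H(γ w), γ w⟩` has nonpositive real part, hence so does
`K 0` by the mean value property. The expansions `H₂(γ w) = -z₂ w + o(w)` and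
`H₁(γ w) = (q¹_{0,2} z₂² - z₁) w² + o(w²)` give `K 0 = ⟨H^{[c]}(z), z⟩`. For the second one,
`H₁(w² z₁, w z₂) - H₁(0, w z₂) = -w² z₁ + o(w²)` because a holomorphic map is strictly
differentiable (Schwarz lemma), and `H₁(0, t) = q¹_{0,2} t² + O(t³)` is one-variable Taylor.
-/

open Metric Set Filter Asymptotics
open scoped Topology

theorem AnalyticAt.isBigO_sub_taylor_two {𝕜 : Type*} [NontriviallyNormedField 𝕜] [CompleteSpace 𝕜]
    [CharZero 𝕜] {f : 𝕜 → 𝕜} {x : 𝕜} (hf : AnalyticAt 𝕜 f x) :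
    (fun t => f (x + t) - (f x + deriv f x * t + iteratedDeriv 2 f x / 2 * t ^ 2))
      =O[𝓝 0] fun t => t ^ 3 := by
  rw [← isBigO_norm_right]
  simpa [FormalMultilinearSeries.partialSum, Finset.sum_range_succ,
    FormalMultilinearSeries.ofScalars_apply_eq, mul_comm]
    using hf.hasFPowerSeriesAt.isBigO_sub_partialSum_pow 3

theorem tendsto_div_pow_of_isLittleO {𝕜 : Type*} [NontriviallyNormedField 𝕜] {f : 𝕜 → 𝕜}
    {c : 𝕜} {n : ℕ} (h : (fun t => f t - c * t ^ n) =o[𝓝 0] fun t => t ^ n) :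
    Tendsto (fun t => f t / t ^ n) (𝓝[≠] 0) (𝓝 c) := by
  have := (h.tendsto_div_nhds_zero.mono_left (nhdsWithin_le_nhds (s := {0}ᶜ))).add_const c
  rw [zero_add] at this
  refine this.congr' ?_
  filter_upwards [self_mem_nhdsWithin] with t (ht : t ≠ 0)
  rw [sub_div, mul_div_cancel_right₀ _ (pow_ne_zero n ht), sub_add_cancel]

theorem DifferentiableOn.hasStrictFDerivAt {E F : Type*} [NormedAddCommGroup E]
    [NormedSpace ℂ E] [NormedAddCommGroup F] [NormedSpace ℂ F] {f : E → F} {s : Set E} {x : E}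
    (hf : DifferentiableOn ℂ f s) (hs : s ∈ 𝓝 x) : HasStrictFDerivAt f (fderiv ℂ f x) x := by
  set L := fderiv ℂ f x
  set g : E → F := fun y => f y - L y
  have hg : HasFDerivAt g (0 : E →L[ℂ] F) x :=
    (hf.differentiableAt hs).hasFDerivAt.sub L.hasFDerivAt |>.congr_fderiv (sub_self L)
  rw [hasStrictFDerivAt_iff_isLittleO, isLittleO_iff]
  intro ε hε
  obtain ⟨R, hR, hRs⟩ : ∃ R > 0, ∀ y ∈ ball x R, y ∈ s ∧ ‖g y - g x‖ ≤ ε / 4 * ‖y - x‖ := by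
    refine Metric.eventually_nhds_iff_ball.1 (Filter.Eventually.and hs ?_)
    simpa using (hasFDerivAt_iff_isLittleO.1 hg).def (by positivity : 0 < ε / 4)
  filter_upwards [ball_mem_nhds (x, x) (by positivity : 0 < R / 4)] with p hp
  rw [mem_ball, Prod.dist_eq, max_lt_iff, dist_eq_norm, dist_eq_norm] at hp
  obtain ⟨hp1, hp2⟩ : ‖p.1 - x‖ < R / 4 ∧ ‖p.2 - x‖ < R / 4 := hp
  have hsub : ball p.2 (R / 2) ⊆ ball x R := ball_subset_ball' (by rw [dist_eq_norm]; linarith)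
  -- `g` oscillates by at most `ε R / 2` on `ball p.2 (R / 2)`; the Schwarz lemma turns this
  -- into an `ε`-Lipschitz bound there.
  have hmaps : MapsTo g (ball p.2 (R / 2)) (closedBall (g p.2) (ε / 2 * R)) := by
    intro y hy
    have hy' := mem_ball_iff_norm.1 (hsub hy)
    rw [mem_closedBall_iff_norm]
    calc ‖g y - g p.2‖ ≤ ‖g y - g x‖ + ‖g p.2 - g x‖ :=
          (norm_sub_le_norm_sub_add_norm_sub _ (g x) _).trans_eq (by rw [norm_sub_rev (g x)])
      _ ≤ ε / 4 * R + ε / 4 * R := by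
        gcongr
        · exact (hRs y (hsub hy)).2.trans (by gcongr)
        · exact (hRs p.2 (mem_ball_iff_norm.2 (by linarith))).2.trans (by gcongr; linarith)
      _ = ε / 2 * R := by ring
  have hgd : DifferentiableOn ℂ g (ball p.2 (R / 2)) :=
    ((hf.mono fun y hy => (hRs y hy).1).sub L.differentiableOn).mono hsub
  have hp12 : p.1 ∈ ball p.2 (R / 2) := by
    rw [mem_ball_iff_norm]
    linarith [norm_sub_le_norm_sub_add_norm_sub p.1 x p.2, norm_sub_rev x p.2]
  calc ‖f p.1 - f p.2 - L (p.1 - p.2)‖ = ‖g p.1 - g p.2‖ := by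
        congr 1; simp only [g, map_sub]; abel
    _ ≤ ε / 2 * R / (R / 2) * ‖p.1 - p.2‖ := by
        simpa only [dist_eq_norm] using
          Complex.dist_le_div_mul_dist_of_mapsTo_ball hgd hmaps hp12
    _ = ε * ‖p.1 - p.2‖ := by field_simp

theorem re_le_of_re_le_on_sphere {f : ℂ → ℂ} {c : ℂ} {R a : ℝ} {s : Set ℂ} (hs : s.Countable)
    (hc : ContinuousOn f (closedBall c |R|)) (hd : ∀ z ∈ ball c |R| \ s, DifferentiableAt ℂ f z)
    (hle : ∀ z ∈ sphere c |R|, (f z).re ≤ a) : (f c).re ≤ a := by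
  have hint : CircleIntegrable f c R := (hc.mono sphere_subset_closedBall).circleIntegrable'
  rw [← circleAverage_of_differentiable_on_off_countable hs hc hd,
    ← Complex.reCLM_apply, ← Complex.reCLM.circleAverage_comp_comm hint]
  exact Real.circleAverage_mono_on_of_le_circle (Complex.reCLM.continuous.comp_continuousOn
    (hc.mono sphere_subset_closedBall)).circleIntegrable' hle

lemma isOpen_B2 : IsOpen B2 :=
  isOpen_lt (by fun_prop) continuous_const

lemma zero_mem_B2 : (0 : ℂ × ℂ) ∈ B2 := by simp [B2]

lemma mem_B2_of_norm_le {z : ℂ × ℂ} (hz : z ∈ B2) {a b : ℂ} (ha : ‖a‖ ≤ ‖z.1‖)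
    (hb : ‖b‖ ≤ ‖z.2‖) : (a, b) ∈ B2 := by
  have h1 := pow_le_pow_left₀ (norm_nonneg a) ha 2
  have h2 := pow_le_pow_left₀ (norm_nonneg b) hb 2
  have h3 : ‖z.1‖ ^ 2 + ‖z.2‖ ^ 2 < 1 := hz
  show ‖a‖ ^ 2 + ‖b‖ ^ 2 < 1
  linarith

lemma mem_B2_of_norm_le_one {z : ℂ × ℂ} (hz : z ∈ B2) {w : ℂ} (hw : ‖w‖ ≤ 1) :
    (w ^ 2 * z.1, w * z.2) ∈ B2 := by
  have hw2 : ‖w‖ ^ 2 ≤ 1 := pow_le_one₀ (norm_nonneg w) hw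
  refine mem_B2_of_norm_le hz ?_ ?_ <;> rw [norm_mul]
  · rw [norm_pow]; exact mul_le_of_le_one_left (norm_nonneg _) hw2
  · exact mul_le_of_le_one_left (norm_nonneg _) hw

lemma hasFDerivAt_shear (c : ℂ) :
    HasFDerivAt (fun z : ℂ × ℂ => (-z.1 + c * z.2 ^ 2, -z.2))
      (-ContinuousLinearMap.id ℂ (ℂ × ℂ)) 0 := by
  have hfst := hasFDerivAt_fst (𝕜 := ℂ) (p := (0 : ℂ × ℂ))
  have hsnd := hasFDerivAt_snd (𝕜 := ℂ) (p := (0 : ℂ × ℂ))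
  refine ((hfst.fun_neg.fun_add ((hsnd.pow 2).const_mul c)).prodMk hsnd.fun_neg).congr_fderiv ?_
  ext <;> simp

namespace MminusClass

variable {H : ℂ × ℂ → ℂ × ℂ}

lemma hasStrictFDerivAt (hH : MminusClass H) :
    HasStrictFDerivAt H (-ContinuousLinearMap.id ℂ (ℂ × ℂ)) 0 := by
  have hL : fderiv ℂ H 0 = -ContinuousLinearMap.id ℂ (ℂ × ℂ) := ContinuousLinearMap.ext hH.2.2.1
  exact hL ▸ hH.1.hasStrictFDerivAt (isOpen_B2.mem_nhds zero_mem_B2)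

lemma tendsto_snd_div (hH : MminusClass H) (z : ℂ × ℂ) :
    Tendsto (fun w : ℂ => (H (w ^ 2 * z.1, w * z.2)).2 / w) (𝓝[≠] 0) (𝓝 (-z.2)) := by
  have hγ : DifferentiableAt ℂ (fun w : ℂ => (w ^ 2 * z.1, w * z.2)) 0 := by fun_prop
  have hO : (fun w : ℂ => (w ^ 2 * z.1, w * z.2)) =O[𝓝 0] fun w => w := by
    simpa using hγ.hasFDerivAt.isBigO_sub
  have hlin := (hasFDerivAt_iff_isLittleO_nhds_zero.1
    hH.hasStrictFDerivAt.hasFDerivAt).comp_tendsto (hγ.continuousAt.tendsto.trans (by simp))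
  have := ((ContinuousLinearMap.snd ℂ ℂ ℂ).isBigO_comp _ _).trans_isLittleO
    (hlin.trans_isBigO hO)
  have key : (fun w : ℂ => (H (w ^ 2 * z.1, w * z.2)).2 - -z.2 * w ^ 1) =o[𝓝 0]
      fun w => w ^ 1 := by
    simpa [hH.2.1, mul_comm] using this
  simpa using tendsto_div_pow_of_isLittleO key

lemma isLittleO_fst_axis (hH : MminusClass H) :
    (fun t : ℂ => (H (0, t)).1 - shearCoef H * t ^ 2) =o[𝓝 0] fun t => t ^ 2 := by
  set u : ℂ → ℂ := fun t => (H (0, t)).1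
  have hu : AnalyticAt ℂ u 0 := by
    refine DifferentiableOn.analyticAt (s := (fun t : ℂ => ((0 : ℂ), t)) ⁻¹' B2) ?_ ?_
    · exact (hH.1.comp (by fun_prop) (mapsTo_preimage _ _)).fst
    · exact (isOpen_B2.preimage (by fun_prop)).mem_nhds
        (by simpa [Prod.mk_zero_zero] using zero_mem_B2)
  have hu0 : u 0 = 0 := by simp [u, Prod.mk_zero_zero, hH.2.1]
  have hu' : deriv u 0 = 0 := by
    have hemb : HasDerivAt (fun t : ℂ => ((0 : ℂ), t)) (0, 1) 0 :=
      (hasDerivAt_const _ _).prodMk (hasDerivAt_id _)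
    have := hasFDerivAt_fst.comp_hasDerivAt 0
      (hH.hasStrictFDerivAt.hasFDerivAt.comp_hasDerivAt_of_eq 0 hemb rfl)
    simpa [u, Function.comp_def] using this.deriv
  have := hu.isBigO_sub_taylor_two.trans_isLittleO (isLittleO_pow_pow (by norm_num : 2 < 3))
  simpa [hu0, hu', shearCoef, u, div_eq_inv_mul, mul_assoc] using this

lemma tendsto_fst_div_sq (hH : MminusClass H) (z : ℂ × ℂ) :
    Tendsto (fun w : ℂ => (H (w ^ 2 * z.1, w * z.2)).1 / w ^ 2) (𝓝[≠] 0)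
      (𝓝 (shearCoef H * z.2 ^ 2 - z.1)) := by
  have hpair : Tendsto (fun w : ℂ => ((w ^ 2 * z.1, w * z.2), ((0 : ℂ), w * z.2))) (𝓝 0)
      (𝓝 ((0 : ℂ × ℂ), (0 : ℂ × ℂ))) := by
    have : Continuous fun w : ℂ => ((w ^ 2 * z.1, w * z.2), ((0 : ℂ), w * z.2)) := by fun_prop
    simpa [Prod.mk_zero_zero] using this.tendsto 0
  have hO : (fun w : ℂ => (w ^ 2 * z.1, w * z.2) - ((0 : ℂ), w * z.2)) =O[𝓝 0]
      fun w => w ^ 2 := by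
    refine IsBigO.of_bound ‖z.1‖ (Eventually.of_forall fun w => ?_)
    simp only [Prod.mk_sub_mk, sub_zero, sub_self, Prod.norm_def, norm_mul, norm_pow, norm_zero]
    rw [max_eq_left (by positivity), mul_comm]
  have hcross := ((ContinuousLinearMap.fst ℂ ℂ ℂ).isBigO_comp _ _).trans_isLittleO
    (((hasStrictFDerivAt_iff_isLittleO.1 hH.hasStrictFDerivAt).comp_tendsto hpair).trans_isBigO hO)
  have hscale : (fun w : ℂ => (w * z.2) ^ 2) =O[𝓝 0] fun w => w ^ 2 :=
    ((isBigO_refl (fun w : ℂ => w ^ 2) (𝓝 0)).const_mul_left (z.2 ^ 2)).congr_left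
      fun w => by ring
  have haxis := (hH.isLittleO_fst_axis.comp_tendsto
    (by simpa using (continuous_mul_const z.2).tendsto 0)).trans_isBigO hscale
  refine tendsto_div_pow_of_isLittleO ((hcross.add haxis).congr_left fun w => ?_)
  simp only [neg_apply, ContinuousLinearMap.id_apply, neg_sub, Function.comp_apply,
    Prod.mk_sub_mk, zero_sub, sub_self, ContinuousLinearMap.coe_fst', Prod.fst_sub,
    sub_neg_eq_add]
  ring

lemma re_shear_inner_nonpos (hH : MminusClass H) {z : ℂ × ℂ} (hz : z ∈ B2) :
    ((-z.1 + shearCoef H * z.2 ^ 2) * (starRingEnd ℂ) z.1 + -z.2 * (starRingEnd ℂ) z.2).re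
      ≤ 0 := by
  classical
  set K : ℂ → ℂ := fun w => (starRingEnd ℂ) z.1 * ((H (w ^ 2 * z.1, w * z.2)).1 / w ^ 2)
    + (starRingEnd ℂ) z.2 * ((H (w ^ 2 * z.1, w * z.2)).2 / w)
  set T := (-z.1 + shearCoef H * z.2 ^ 2) * (starRingEnd ℂ) z.1 + -z.2 * (starRingEnd ℂ) z.2
  have hlim : Tendsto K (𝓝[≠] 0) (𝓝 T) := by
    convert ((hH.tendsto_fst_div_sq z).const_mul ((starRingEnd ℂ) z.1)).add
      ((hH.tendsto_snd_div z).const_mul ((starRingEnd ℂ) z.2)) using 2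
    ring
  have hdiff : ∀ w ≠ 0, ‖w‖ ≤ 1 → DifferentiableAt ℂ (Function.update K 0 T) w := by
    intro w hw hw1
    have hHw : DifferentiableAt ℂ H (w ^ 2 * z.1, w * z.2) :=
      hH.1.differentiableAt (isOpen_B2.mem_nhds (mem_B2_of_norm_le_one hz hw1))
    have hK : DifferentiableAt ℂ K w := by fun_prop (disch := simp [hw])
    exact hK.congr_of_eventuallyEq
      ((eventually_ne_nhds hw).mono fun v hv => Function.update_of_ne hv _ _)
  have hcont : ContinuousOn (Function.update K 0 T) (closedBall 0 |1|) := by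
    intro w hw
    rcases eq_or_ne w 0 with rfl | hw0
    · exact (continuousAt_update_same.2 hlim).continuousWithinAt
    · exact (hdiff w hw0 (by simpa using hw)).continuousAt.continuousWithinAt
  have hsphere : ∀ w ∈ sphere (0 : ℂ) |1|, (Function.update K 0 T w).re ≤ 0 := by
    intro w hw
    rw [abs_one, mem_sphere_zero_iff_norm] at hw
    have hw0 : w ≠ 0 := norm_ne_zero_iff.1 (by rw [hw]; exact one_ne_zero)
    rw [Function.update_of_ne hw0]
    convert hH.2.2.2 _ (mem_B2_of_norm_le_one hz hw.le) using 2
    simp only [K, map_mul, map_pow, ← inv_eq_conj hw]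
    field_simp
  simpa using re_le_of_re_le_on_sphere (countable_singleton 0) hcont
    (fun w hw => hdiff w hw.2 (by simpa using (mem_ball.1 hw.1).le)) hsphere

end MminusClass

/-- Shearing a vector field in the class `M₋` yields a vector field in `M₋`. -/
theorem shearing_mem_Mminus (H : ℂ × ℂ → ℂ × ℂ) (hH : MminusClass H) :
    MminusClass (fun z : ℂ × ℂ => (-z.1 + shearCoef H * z.2 ^ 2, -z.2)) :=
  ⟨by fun_prop, by simp, fun v => by rw [(hasFDerivAt_shear _).fderiv]; rfl,
    fun _ hz => hH.re_shear_inner_nonpos hz⟩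
end
end

section
/- Let c ≥ 0 be a real number. If -x² - y² + c·x·y² ≤ 0 holds for all real x, y ≥ 0 with x² + y² < 1, then c ≤ 3√3/2. Conversely, if c ≤ 3√3/2, then -x² - y² + c·x·y² ≤ 0 for all real x, y ≥ 0 with x² + y² < 1. -/
/-- For `c ≥ 0`, the inequality `-x² - y² + c x y² ≤ 0` holds for all `x, y ≥ 0` with
`x² + y² < 1` if and only if `c ≤ 3√3/2`. -/
theorem neg_sq_add_ineq_iff (c : ℝ) (hc : 0 ≤ c) :
    (∀ x y : ℝ, 0 ≤ x → 0 ≤ y → x ^ 2 + y ^ 2 < 1 →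
      -x ^ 2 - y ^ 2 + c * x * y ^ 2 ≤ 0) ↔ c ≤ 3 * Real.sqrt 3 / 2 := by
  have h3 : Real.sqrt 3 ^ 2 = 3 := Real.sq_sqrt (by norm_num)
  have h3pos : (0:ℝ) < Real.sqrt 3 := Real.sqrt_pos.mpr (by norm_num)
  have h2 : Real.sqrt 2 ^ 2 = 2 := Real.sq_sqrt (by norm_num)
  have h2pos : (0:ℝ) < Real.sqrt 2 := Real.sqrt_pos.mpr (by norm_num)
  constructor
  · intro h
    by_contra hlt
    push_neg at hlt
    have hcpos : 0 < c := lt_trans (by positivity) hlt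
    set r : ℝ := (3 * Real.sqrt 3 / (2 * c) + 1) / 2 with hr
    have hr1 : 3 * Real.sqrt 3 / (2 * c) < 1 := by
      rw [div_lt_one (by positivity)]; linarith
    have hrq : 0 < 3 * Real.sqrt 3 / (2 * c) := by positivity
    have hrpos : 0 < r := by rw [hr]; linarith
    have hrlt : r < 1 := by rw [hr]; linarith
    have hrgt : 3 * Real.sqrt 3 / 2 < c * r := by
      have h1 : 3 * Real.sqrt 3 / (2 * c) < r := by rw [hr]; linarith
      calc 3 * Real.sqrt 3 / 2 = c * (3 * Real.sqrt 3 / (2 * c)) := by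
            field_simp
        _ < c * r := mul_lt_mul_of_pos_left h1 hcpos
    have hx : (0:ℝ) ≤ r / Real.sqrt 3 := by positivity
    have hy : (0:ℝ) ≤ r * Real.sqrt 2 / Real.sqrt 3 := by positivity
    have hxx : (r / Real.sqrt 3) ^ 2 = r ^ 2 / 3 := by
      rw [div_pow, h3]
    have hyy : (r * Real.sqrt 2 / Real.sqrt 3) ^ 2 = 2 * r ^ 2 / 3 := by
      rw [div_pow, mul_pow, h3, h2]; ring
    have hsum : (r / Real.sqrt 3) ^ 2 + (r * Real.sqrt 2 / Real.sqrt 3) ^ 2 < 1 := by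
      rw [hxx, hyy]
      nlinarith
    have := h _ _ hx hy hsum
    rw [hxx, hyy] at this
    -- this : -(r^2/3) - 2*r^2/3 + c * (r/√3) * (2*r^2/3) ≤ 0
    have key : c * r * r ^ 2 * 2 / (3 * Real.sqrt 3) ≤ r ^ 2 := by
      have : c * (r / Real.sqrt 3) * (2 * r ^ 2 / 3) ≤ r ^ 2 := by linarith
      calc c * r * r ^ 2 * 2 / (3 * Real.sqrt 3)
          = c * (r / Real.sqrt 3) * (2 * r ^ 2 / 3) := by
            field_simp
        _ ≤ r ^ 2 := this
    have hr2 : 0 < r ^ 2 := by positivity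
    -- from key : c * r ≤ 3√3/2, contradiction
    have : c * r ≤ 3 * Real.sqrt 3 / 2 := by
      rw [div_le_iff₀ (by positivity)] at key
      have h' : c * r * r ^ 2 * 2 ≤ 3 * Real.sqrt 3 * r ^ 2 := by nlinarith
      nlinarith
    linarith
  · intro hcle x y hx hy hxy
    have hs : 0 ≤ x ^ 2 + y ^ 2 := by positivity
    have hamgm : 27 / 4 * x ^ 2 * y ^ 4 ≤ (x ^ 2 + y ^ 2) ^ 3 := by
      nlinarith [sq_nonneg (x ^ 2 - y ^ 2 / 2), sq_nonneg x, sq_nonneg y,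
        mul_nonneg (sq_nonneg (x ^ 2 - y ^ 2 / 2)) (by positivity : (0:ℝ) ≤ x ^ 2 + 4 * y ^ 2)]
    have hcube : (x ^ 2 + y ^ 2) ^ 3 ≤ (x ^ 2 + y ^ 2) ^ 2 := by nlinarith
    have ht : 0 ≤ 3 * Real.sqrt 3 / 2 * (x * y ^ 2) := by positivity
    have htsq : (3 * Real.sqrt 3 / 2 * (x * y ^ 2)) ^ 2 = 27 / 4 * x ^ 2 * y ^ 4 := by
      have : (3 * Real.sqrt 3 / 2 * (x * y ^ 2)) ^ 2
          = Real.sqrt 3 ^ 2 * (9 / 4 * x ^ 2 * y ^ 4) := by ring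
      rw [this, h3]; ring
    have ht2 : (3 * Real.sqrt 3 / 2 * (x * y ^ 2)) ^ 2 ≤ (x ^ 2 + y ^ 2) ^ 2 := by
      rw [htsq]; linarith
    have hkey : 3 * Real.sqrt 3 / 2 * (x * y ^ 2) ≤ x ^ 2 + y ^ 2 := by
      have := Real.sqrt_le_sqrt ht2
      rwa [Real.sqrt_sq ht, Real.sqrt_sq hs] at this

    have : c * x * y ^ 2 ≤ 3 * Real.sqrt 3 / 2 * (x * y ^ 2) := by
      have hxy2 : (0:ℝ) ≤ x * y ^ 2 := by positivity
      calc c * x * y ^ 2 = c * (x * y ^ 2) := by ring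
        _ ≤ 3 * Real.sqrt 3 / 2 * (x * y ^ 2) := mul_le_mul_of_nonneg_right hcle hxy2
    linarith
end

section
/- For all real s, t with 0 ≤ s ≤ t, the map φ_{s,t}(z₁,z₂) := (e^{s-t} z₁ + (3√3/2)·e^{s-t}(1 - e^{s-t})·z₂², e^{s-t} z₂) maps B² into B²; that is, |z₁|² + |z₂|² < 1 implies |e^{s-t} z₁ + (3√3/2)e^{s-t}(1 - e^{s-t}) z₂²|² + |e^{s-t} z₂|² < 1. -/
open Complex

private lemma keyM (r f : ℝ) (hr0 : 0 ≤ r) (hr1 : r ≤ 1) (hf0 : 0 ≤ f) (hf1 : f ≤ 1) :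
    f^2*(3-f)*r^2 + (1-r)^2*(1+3*r) - 6*r^2*(1-r)*f ≥ 0 := by
  nlinarith [sq_nonneg (r*(f-1+r)), sq_nonneg (f-1+r), mul_nonneg hf0 (sq_nonneg (r*(f-1+r))), mul_nonneg (sub_nonneg.2 hf1) (sq_nonneg (r*(f-1+r))), mul_nonneg (sub_nonneg.2 hr1) (sq_nonneg (r*(f-1+r))), mul_nonneg (sub_nonneg.2 hr1) (sq_nonneg (f-1+r)), mul_nonneg hr0 (sq_nonneg (f-1+r)), mul_nonneg (mul_nonneg hr0 (sub_nonneg.2 hr1)) (sq_nonneg (1-r)), mul_nonneg (mul_nonneg hf0 (sub_nonneg.2 hf1)) (sq_nonneg r), mul_nonneg (mul_nonneg hr0 hf0) (sub_nonneg.2 hr1), sq_nonneg (f - 2*(1-r)), mul_nonneg (sub_nonneg.2 hf1) (sq_nonneg (1-r))]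

private lemma keyH (r p : ℝ) (hr0 : 0 ≤ r) (hr1 : r ≤ 1) (hp : 0 ≤ p) (hp3 : p^2 ≤ 3) :
    (3*p - p^3)*r^2 + 3/4*(3-p^2)^2*r^2*(1-r) ≤ 1 + r := by
  rcases le_total p 1 with h | h
  · have hf0 : (0:ℝ) ≤ 1 - p := by linarith
    have hM := keyM r (1-p) hr0 hr1 hf0 (by linarith)
    have hextra : 0 ≤ 3/4*r^2*(1-r)*(1-p)^3*(3+p) :=
      mul_nonneg (mul_nonneg (mul_nonneg (mul_nonneg (by norm_num) (sq_nonneg r))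
        (by linarith)) (pow_nonneg hf0 3)) (by linarith)
    nlinarith [hM, hextra]
  · nlinarith [sq_nonneg (p-1), sq_nonneg (1-r), mul_nonneg (sub_nonneg.2 hr1) (sq_nonneg (p-1)), mul_nonneg (mul_nonneg (sub_nonneg.2 h) (sub_nonneg.2 hr1)) (sq_nonneg r), mul_nonneg (mul_nonneg (sub_nonneg.2 h) (sub_nonneg.2 h)) (mul_nonneg (sub_nonneg.2 hr1) (sq_nonneg r)), sq_nonneg (r*(p-1)), mul_nonneg (sub_nonneg.2 h) (sq_nonneg (r*(p-1)))]

private lemma keyIneq (r x u q : ℝ) (hr0 : 0 ≤ r) (hr1 : r ≤ 1) (hx : 0 ≤ x) (hu : 0 ≤ u)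
    (hxu : x^2 + u ≤ 1) (hq : q^2 = 3) (hq0 : 0 ≤ q) :
    3*q*r^2*x*u + 27/4*r^2*(1-r)*u^2 ≤ 1 + r := by
  have hu1 : 1 - u ≥ 0 := by nlinarith [sq_nonneg x]
  set w := Real.sqrt (1-u) with hw
  have hw0 : 0 ≤ w := Real.sqrt_nonneg _
  have hw2 : w^2 = 1 - u := Real.sq_sqrt hu1
  have hxw : x ≤ w := by
    rw [← Real.sqrt_sq hx]
    exact Real.sqrt_le_sqrt (by linarith)
  have hp0 : 0 ≤ q*w := mul_nonneg hq0 hw0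
  have hp3 : (q*w)^2 ≤ 3 := by nlinarith
  have hH := keyH r (q*w) hr0 hr1 hp0 hp3
  have e1 : 3*(q*w) - (q*w)^3 = 3*q*w*u := by
    linear_combination (-(q*w^3))*hq + (-3*q*w)*hw2
  have h1 : 3*q*x*u ≤ 3*(q*w) - (q*w)^3 := by
    rw [e1]
    nlinarith [mul_le_mul_of_nonneg_left hxw (mul_nonneg (mul_nonneg (by norm_num : (0:ℝ) ≤ 3) hq0) hu)]
  have h2 : 27/4*r^2*(1-r)*u^2 = 3/4*(3-(q*w)^2)^2*r^2*(1-r) := by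
    linear_combination (r^2*(1-r)*(9/2*w^2 - 3/4*q^2*w^4 - 9/4*w^4))*hq +
      (r^2*(1-r)*(27/4 - 27/4*w^2 + 27/4*u))*hw2
  nlinarith [mul_le_mul_of_nonneg_right h1 (sq_nonneg r), hH, h2]

/-- For `0 ≤ s ≤ t`, the map
`φ_{s,t}(z₁,z₂) = (e^{s-t} z₁ + (3√3/2) e^{s-t}(1 - e^{s-t}) z₂², e^{s-t} z₂)`
maps the unit ball of `ℂ²` into itself. -/
theorem transition_maps_ball (s t : ℝ) (hs : 0 ≤ s) (hst : s ≤ t) (z1 z2 : ℂ)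
    (hz : ‖z1‖ ^ 2 + ‖z2‖ ^ 2 < 1) :
    ‖((Real.exp (s - t) : ℝ) : ℂ) * z1 +
        ((3 * Real.sqrt 3 / 2 * Real.exp (s - t) * (1 - Real.exp (s - t)) : ℝ) : ℂ) *
          z2 ^ 2‖ ^ 2 +
      ‖((Real.exp (s - t) : ℝ) : ℂ) * z2‖ ^ 2 < 1 := by
  set r := Real.exp (s - t) with hrdef
  have hr0 : 0 < r := Real.exp_pos _
  have hr1 : r ≤ 1 := Real.exp_le_one_iff.mpr (by linarith)
  set q := Real.sqrt 3 with hqdef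
  have hq : q^2 = 3 := Real.sq_sqrt (by norm_num)
  have hq0 : 0 ≤ q := Real.sqrt_nonneg _
  set x := ‖z1‖ with hxdef
  set y := ‖z2‖ with hydef
  have hx : 0 ≤ x := norm_nonneg _
  have hy : 0 ≤ y := norm_nonneg _
  set c := 3 * q / 2 * r * (1 - r) with hcdef
  have hc0 : 0 ≤ c := by
    apply mul_nonneg (mul_nonneg (by positivity) hr0.le) (by linarith)
  have hA : ‖((r : ℝ) : ℂ) * z1 + ((c : ℝ) : ℂ) * z2 ^ 2‖ ≤ r * x + c * y^2 := by
    calc ‖((r : ℝ) : ℂ) * z1 + ((c : ℝ) : ℂ) * z2 ^ 2‖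
        ≤ ‖((r : ℝ) : ℂ) * z1‖ + ‖((c : ℝ) : ℂ) * z2 ^ 2‖ := norm_add_le _ _
      _ = r * x + c * y^2 := by
          rw [norm_mul, norm_mul, norm_pow, Complex.norm_real, Complex.norm_real,
            Real.norm_eq_abs, Real.norm_eq_abs, _root_.abs_of_nonneg hr0.le,
            _root_.abs_of_nonneg hc0]
  have hB : ‖((r : ℝ) : ℂ) * z2‖ = r * y := by
    rw [norm_mul, Complex.norm_real, Real.norm_eq_abs, _root_.abs_of_nonneg hr0.le]
  have hA2 : ‖((r : ℝ) : ℂ) * z1 + ((c : ℝ) : ℂ) * z2 ^ 2‖^2 ≤ (r * x + c * y^2)^2 :=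
    pow_le_pow_left₀ (norm_nonneg _) hA 2
  have hkey := keyIneq r x (y^2) q hr0.le hr1 hx (sq_nonneg y) (by nlinarith) hq hq0
  have hkey' : (1-r) * (3*q*r^2*x*(y^2) + 27/4*r^2*(1-r)*(y^2)^2) ≤ (1-r) * (1+r) :=
    mul_le_mul_of_nonneg_left hkey (by linarith)
  have hfin : (r * x + c * y^2)^2 + (r*y)^2 < 1 := by
    have expand : (r * x + c * y^2)^2 + (r*y)^2
        = r^2*x^2 + (1-r)*(3*q*r^2*x*(y^2) + 27/4*r^2*(1-r)*(y^2)^2) + r^2*y^2 := by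
      rw [hcdef]
      linear_combination (9/4*r^2*(1-r)^2*y^4)*hq
    rw [expand]
    nlinarith [hkey', mul_pos (mul_pos hr0 hr0) (by linarith : (0:ℝ) < 1 - x^2 - y^2)]
  calc ‖((r : ℝ) : ℂ) * z1 + ((c : ℝ) : ℂ) * z2 ^ 2‖^2 + ‖((r : ℝ) : ℂ) * z2‖^2
      ≤ (r * x + c * y^2)^2 + (r*y)^2 := by rw [hB]; linarith [hA2]
    _ < 1 := hfin
end

section
/- Let q : ℝ₊ → ℂ be measurable with |q(t)| ≤ 3√3/2 for all t, and for 0 ≤ s ≤ t define φ_{s,t}(z₁,z₂) := (e^{s-t} z₁ + a(s,t) z₂², e^{s-t} z₂), where a(s,t) := e^{s-t} ∫_s^t q(τ) e^{s-τ} dτ. Then for every fixed s ≥ 0 the limit f_s(z) := lim_{t→∞} e^t φ_{s,t}(z) exists for each z ∈ B² and equals f_s(z₁,z₂) = (e^s z₁ + a(s) z₂², e^s z₂), where a(s) := e^s ∫_s^∞ q(τ) e^{s-τ} dτ; moreover |a(s)| ≤ (3√3/2)·e^s. -/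
open Complex MeasureTheory Filter

noncomputable section

lemma aux_bound_integrable (s : ℝ) :
    IntegrableOn (fun τ => 3 * Real.sqrt 3 / 2 * Real.exp (s - τ)) (Set.Ioi s) := by
  have heq : (fun τ : ℝ => 3 * Real.sqrt 3 / 2 * Real.exp (s - τ))
      = fun τ => (3 * Real.sqrt 3 / 2 * Real.exp s) * Real.exp (-1 * τ) := by
    funext τ
    rw [neg_one_mul, mul_assoc, ← Real.exp_add, sub_eq_add_neg]
  rw [heq]
  exact (exp_neg_integrableOn_Ioi s one_pos).const_mul _

lemma aux_integrable (q : ℝ → ℂ) (hq : Measurable q)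
    (hqb : ∀ t : ℝ, 0 ≤ t → ‖q t‖ ≤ 3 * Real.sqrt 3 / 2) (s : ℝ) (hs : 0 ≤ s) :
    IntegrableOn (fun τ => q τ * ((Real.exp (s - τ) : ℝ) : ℂ)) (Set.Ioi s) := by
  refine Integrable.mono' (aux_bound_integrable s) ?_ ?_
  · exact ((hq.mul ((Complex.measurable_ofReal.comp (Real.measurable_exp.comp
      (measurable_const.sub measurable_id))))).aestronglyMeasurable)
  · filter_upwards [ae_restrict_mem measurableSet_Ioi] with τ hτ
    rw [norm_mul, Complex.norm_real, Real.norm_of_nonneg (Real.exp_nonneg _)]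
    exact mul_le_mul_of_nonneg_right (hqb τ (le_of_lt (lt_of_le_of_lt hs hτ)))
      (Real.exp_nonneg _)

/-- Let `q` be measurable with `|q| ≤ 3√3/2` on `ℝ₊`, and for `0 ≤ s ≤ t` set
`φ_{s,t}(z) = (e^{s-t} z₁ + a(s,t) z₂², e^{s-t} z₂)` with
`a(s,t) = e^{s-t} ∫_s^t q(τ) e^{s-τ} dτ`. Then for fixed `s ≥ 0`, `e^t φ_{s,t}(z)` converges
as `t → ∞`, for every `z ∈ B²`, to `(e^s z₁ + a(s) z₂², e^s z₂)` where
`a(s) = e^s ∫_s^∞ q(τ) e^{s-τ} dτ`; moreover `|a(s)| ≤ (3√3/2) e^s`. -/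
theorem limit_of_scaled_transition (q : ℝ → ℂ) (hq : Measurable q)
    (hqb : ∀ t : ℝ, 0 ≤ t → ‖q t‖ ≤ 3 * Real.sqrt 3 / 2) (s : ℝ) (hs : 0 ≤ s) :
    (∀ z : ℂ × ℂ, z ∈ B2 →
      Tendsto
        (fun t : ℝ =>
          (Real.exp t •
            ((((Real.exp (s - t) : ℝ) : ℂ) * z.1 +
                (((Real.exp (s - t) : ℝ) : ℂ) *
                    ∫ τ in s..t, q τ * ((Real.exp (s - τ) : ℝ) : ℂ)) * z.2 ^ 2,
              ((Real.exp (s - t) : ℝ) : ℂ) * z.2) : ℂ × ℂ)))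
        atTop
        (nhds
          (((Real.exp s : ℝ) : ℂ) * z.1 +
              (((Real.exp s : ℝ) : ℂ) *
                  ∫ τ in Set.Ici s, q τ * ((Real.exp (s - τ) : ℝ) : ℂ)) * z.2 ^ 2,
            ((Real.exp s : ℝ) : ℂ) * z.2))) ∧
    ‖((Real.exp s : ℝ) : ℂ) * ∫ τ in Set.Ici s, q τ * ((Real.exp (s - τ) : ℝ) : ℂ)‖ ≤
      3 * Real.sqrt 3 / 2 * Real.exp s := by
  have hint := aux_integrable q hq hqb s hs
  have hIci : (∫ τ in Set.Ici s, q τ * ((Real.exp (s - τ) : ℝ) : ℂ))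
      = ∫ τ in Set.Ioi s, q τ * ((Real.exp (s - τ) : ℝ) : ℂ) :=
    integral_Ici_eq_integral_Ioi
  constructor
  · intro z hz
    have hconv : Tendsto (fun t : ℝ => ∫ τ in s..t, q τ * ((Real.exp (s - τ) : ℝ) : ℂ))
        atTop (nhds (∫ τ in Set.Ioi s, q τ * ((Real.exp (s - τ) : ℝ) : ℂ))) :=
      intervalIntegral_tendsto_integral_Ioi s hint tendsto_id
    have hsimp : ∀ t : ℝ,
        (Real.exp t •
            ((((Real.exp (s - t) : ℝ) : ℂ) * z.1 +
                (((Real.exp (s - t) : ℝ) : ℂ) *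
                    ∫ τ in s..t, q τ * ((Real.exp (s - τ) : ℝ) : ℂ)) * z.2 ^ 2,
              ((Real.exp (s - t) : ℝ) : ℂ) * z.2) : ℂ × ℂ))
        = ((((Real.exp s : ℝ) : ℂ) * z.1 +
              (((Real.exp s : ℝ) : ℂ) *
                  ∫ τ in s..t, q τ * ((Real.exp (s - τ) : ℝ) : ℂ)) * z.2 ^ 2,
            ((Real.exp s : ℝ) : ℂ) * z.2) : ℂ × ℂ) := by
      intro t
      have he : ((Real.exp t : ℝ) : ℂ) * ((Real.exp (s - t) : ℝ) : ℂ)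
          = ((Real.exp s : ℝ) : ℂ) := by
        rw [← Complex.ofReal_mul, ← Real.exp_add]
        norm_num
      simp only [Prod.smul_mk, Complex.real_smul, Prod.mk.injEq]
      constructor
      · rw [mul_add, ← mul_assoc, he, ← mul_assoc, ← mul_assoc, he]
      · rw [← mul_assoc, he]
    simp only [hsimp, hIci]
    exact (tendsto_const_nhds.add
      (((tendsto_const_nhds.mul hconv).mul tendsto_const_nhds))).prodMk_nhds
      tendsto_const_nhds
  · rw [norm_mul, Complex.norm_real, Real.norm_of_nonneg (Real.exp_nonneg _), hIci, mul_comm]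
    refine mul_le_mul_of_nonneg_right ?_ (Real.exp_nonneg _)
    have hb : ‖∫ τ in Set.Ioi s, q τ * ((Real.exp (s - τ) : ℝ) : ℂ)‖
        ≤ ∫ τ in Set.Ioi s, 3 * Real.sqrt 3 / 2 * Real.exp (s - τ) := by
      refine norm_integral_le_of_norm_le (aux_bound_integrable s) ?_
      filter_upwards [ae_restrict_mem measurableSet_Ioi] with τ hτ
      rw [norm_mul, Complex.norm_real, Real.norm_of_nonneg (Real.exp_nonneg _)]
      exact mul_le_mul_of_nonneg_right (hqb τ (le_of_lt (lt_of_le_of_lt hs hτ)))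
        (Real.exp_nonneg _)
    refine hb.trans ?_
    have hval : ∫ τ in Set.Ioi s, 3 * Real.sqrt 3 / 2 * Real.exp (s - τ)
        = 3 * Real.sqrt 3 / 2 * Real.exp s * ∫ τ in Set.Ioi s, Real.exp (-τ) := by
      rw [← integral_const_mul]
      congr 1
      funext τ
      rw [mul_assoc, ← Real.exp_add, sub_eq_add_neg]
    rw [hval, integral_exp_neg_Ioi, mul_assoc, ← Real.exp_add, add_neg_cancel,
      Real.exp_zero, mul_one]
end
end
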